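/- arXiv:1207.7208 — 3 statements merged into one kernel-verified Lean document; each statement's English description precedes it below -/
import Mathlib

section
/- Let β > 0, K > 0 and let μ be a probability measure on (0,∞) with finite moment m := ∫ s^{2/β} μ(ds) < ∞. Then for every t ≥ 0, the integral over the plane ∫_{ℝ²} μ({s ∈ (0,∞) : (K|x|)^β / s < t}) dx equals (π m / K²) · t^{2/β}. (This identity gives the intensity measure Λ([0,t)) = λ π E[S^{2/β}] K^{-2} t^{2/β} of the point process of propagation losses {l(X_i)/S_i} seen by a user at the origin in a homogeneous Poisson network of intensity λ, and shows it depends on the shadowing distribution only through the moment E[S^{2/β}].) -/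
/-!
For `s > 0` the condition `(K‖x‖)^β / s < t` says that `x` lies in the ball of radius
`(t s)^{1/β} / K`, whose area is `π (t s)^{2/β} / K²`. Tonelli's theorem, applied to the set
`{(x, s) | 0 < s ∧ (K‖x‖)^β / s < t}`, exchanges integrating the `μ`-measure of its `x`-slices
against integrating the area of its `s`-slices, and the latter integral is
`π t^{2/β} K⁻² ∫ s^{2/β} dμ`. The same computation works for any Haar measure on a
finite-dimensional space, with `2` replaced by the dimension and `π` by the measure of the unit ball.
-/

open MeasureTheory Real Metric Module Set

theorem setOf_rpow_mul_norm_lt_eq_ball {E : Type*} [SeminormedAddCommGroup E] {β K r : ℝ}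
    (hβ : 0 < β) (hK : 0 < K) (hr : 0 ≤ r) :
    {x : E | (K * ‖x‖) ^ β < r} = ball 0 (r ^ β⁻¹ / K) := by
  ext x
  rw [mem_ofPred_eq, mem_ball_zero_iff, lt_div_iff₀ hK, mul_comm,
    lt_rpow_inv_iff_of_pos (by positivity) hr hβ]

theorem measurableSet_rpow_mul_norm_div_lt {E : Type*} [NormedAddCommGroup E] [MeasurableSpace E]
    [BorelSpace E] (β K t : ℝ) :
    MeasurableSet {p : E × ℝ | 0 < p.2 ∧ (K * ‖p.1‖) ^ β / p.2 < t} :=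
  (measurableSet_lt measurable_const measurable_snd).inter
    (measurableSet_lt (f := fun p : E × ℝ => (K * ‖p.1‖) ^ β / p.2) (by fun_prop) measurable_const)

theorem setLIntegral_ofReal_mul_rpow_div (μ : Measure ℝ) {p t C : ℝ} (ht : 0 ≤ t) (hC : 0 ≤ C)
    (hint : IntegrableOn (fun s => s ^ p) (Ioi 0) μ) :
    ∫⁻ s in Ioi 0, ENNReal.ofReal ((t * s) ^ p / C) ∂μ
      = ENNReal.ofReal (t ^ p / C * ∫ s in Ioi 0, s ^ p ∂μ) := by
  rw [← integral_const_mul, ofReal_integral_eq_lintegral_ofReal (hint.const_mul _)]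
  · refine setLIntegral_congr_fun measurableSet_Ioi fun s hs => ?_
    rw [mul_rpow ht (le_of_lt hs), mul_div_right_comm]
  · filter_upwards [ae_restrict_mem measurableSet_Ioi] with s hs
    exact mul_nonneg (by positivity) (rpow_nonneg (le_of_lt hs) _)

section
variable {E : Type*} [NormedAddCommGroup E] [NormedSpace ℝ E] [FiniteDimensional ℝ E]
  [MeasurableSpace E] [BorelSpace E] [Nontrivial E] (ν : Measure E) [ν.IsAddHaarMeasure]

theorem addHaar_setOf_rpow_mul_norm_lt {β K r : ℝ} (hβ : 0 < β) (hK : 0 < K) (hr : 0 ≤ r) :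
    ν {x : E | (K * ‖x‖) ^ β < r}
      = ENNReal.ofReal (r ^ ((finrank ℝ E : ℝ) / β) / K ^ finrank ℝ E) * ν (ball 0 1) := by
  rw [setOf_rpow_mul_norm_lt_eq_ball hβ hK hr, Measure.addHaar_ball _ _ (by positivity),
    div_pow, ← rpow_natCast, ← rpow_mul hr, inv_mul_eq_div]

theorem lintegral_measure_rpow_mul_norm_div_lt (μ : Measure ℝ) [SFinite μ] {β K t : ℝ}
    (hβ : 0 < β) (hK : 0 < K) (ht : 0 ≤ t) :
    ∫⁻ x, μ {s | 0 < s ∧ (K * ‖x‖) ^ β / s < t} ∂ν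
      = (∫⁻ s in Ioi 0, ENNReal.ofReal ((t * s) ^ ((finrank ℝ E : ℝ) / β) / K ^ finrank ℝ E) ∂μ)
        * ν (ball 0 1) := by
  set A : Set (E × ℝ) := {p | 0 < p.2 ∧ (K * ‖p.1‖) ^ β / p.2 < t}
  have hA : MeasurableSet A := measurableSet_rpow_mul_norm_div_lt β K t
  have hsection : ∀ s, ν ((·, s) ⁻¹' A) = (Ioi 0).indicator (fun s =>
      ENNReal.ofReal ((t * s) ^ ((finrank ℝ E : ℝ) / β) / K ^ finrank ℝ E) * ν (ball 0 1)) s := by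
    intro s
    rcases le_or_gt s 0 with hs | hs
    · simp [A, hs.not_gt]
    · have hslice : (·, s) ⁻¹' A = {x : E | (K * ‖x‖) ^ β < t * s} := by
        ext x
        simp [A, hs, div_lt_iff₀ hs]
      rw [hslice, addHaar_setOf_rpow_mul_norm_lt ν hβ hK (by positivity),
        indicator_of_mem (mem_Ioi.2 hs)]
  calc ∫⁻ x, μ {s | 0 < s ∧ (K * ‖x‖) ^ β / s < t} ∂ν
      = ∫⁻ s, ν ((·, s) ⁻¹' A) ∂μ := by
        change ∫⁻ x, μ (Prod.mk x ⁻¹' A) ∂ν = _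
        rw [← Measure.prod_apply hA, Measure.prod_apply_symm hA]
    _ = _ := by
        simp_rw [hsection]
        rw [lintegral_indicator measurableSet_Ioi, lintegral_mul_const]
        fun_prop

theorem integral_measure_rpow_mul_norm_div_lt (μ : Measure ℝ) [SFinite μ] {β K t : ℝ}
    (hβ : 0 < β) (hK : 0 < K) (ht : 0 ≤ t)
    (hint : IntegrableOn (fun s => s ^ ((finrank ℝ E : ℝ) / β)) (Ioi 0) μ) :
    ∫ x, (μ {s | 0 < s ∧ (K * ‖x‖) ^ β / s < t}).toReal ∂ν
      = (ν (ball 0 1)).toReal * (t ^ ((finrank ℝ E : ℝ) / β) / K ^ finrank ℝ E)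
        * ∫ s in Ioi 0, s ^ ((finrank ℝ E : ℝ) / β) ∂μ := by
  have hmeas : Measurable fun x => μ {s | 0 < s ∧ (K * ‖x‖) ^ β / s < t} :=
    measurable_measure_prodMk_left (measurableSet_rpow_mul_norm_div_lt (E := E) β K t)
  have hlint := lintegral_measure_rpow_mul_norm_div_lt ν μ hβ hK ht
  rw [setLIntegral_ofReal_mul_rpow_div μ ht (by positivity) hint] at hlint
  have hfin : ∫⁻ x, μ {s | 0 < s ∧ (K * ‖x‖) ^ β / s < t} ∂ν ≠ ⊤ := by
    rw [hlint]
    exact ENNReal.mul_ne_top ENNReal.ofReal_ne_top measure_ball_lt_top.ne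
  have hI : 0 ≤ ∫ s in Ioi 0, s ^ ((finrank ℝ E : ℝ) / β) ∂μ :=
    setIntegral_nonneg measurableSet_Ioi fun s hs => rpow_nonneg (le_of_lt hs) _
  rw [integral_toReal hmeas.aemeasurable (ae_lt_top hmeas hfin), hlint, ENNReal.toReal_mul,
    ENNReal.toReal_ofReal (by positivity)]
  ring

end

theorem stmt_0 (β K : ℝ) (hβ : 0 < β) (hK : 0 < K)
    (μ : Measure ℝ) [IsProbabilityMeasure μ] (hμ : μ (Set.Ioi (0:ℝ))ᶜ = 0)
    (m : ℝ) (hint : Integrable (fun s => s ^ (2/β)) μ)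
    (hm : m = ∫ s, s ^ (2/β) ∂μ) :
    ∀ t : ℝ, 0 ≤ t →
      (∫ x : EuclideanSpace ℝ (Fin 2),
        (μ {s : ℝ | 0 < s ∧ (K * ‖x‖) ^ β / s < t}).toReal)
      = (π * m / K ^ 2) * t ^ (2/β) := by
  intro t ht
  have hrestrict : μ.restrict (Ioi 0) = μ := Measure.restrict_eq_self_of_ae_mem (mem_ae_iff.2 hμ)
  have key := integral_measure_rpow_mul_norm_div_lt
    (volume : Measure (EuclideanSpace ℝ (Fin 2))) μ hβ hK ht
  simp only [finrank_euclideanSpace_fin, Nat.cast_ofNat, hrestrict] at key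
  rw [key hint.integrableOn, EuclideanSpace.volume_ball_fin_two, hm, ENNReal.ofReal_one, one_pow,
    one_mul, ENNReal.toReal_ofReal pi_nonneg]
  ring
end

section
/- Let β > 0, K > 0, n > 0 and s ∈ ℝ. Then the integral over the plane of the Gaussian-CDF kernel equals exactly ∫_{ℝ²} G( (s − β·log(K|x|) − n/β)/√n ) dx = 2π ∫_0^∞ r · G( (s − β·log(Kr) − n/β)/√n ) dr = (π/K²) · e^{2s/β}, independently of n. -/
/-!
With `Z` standard normal, `G(a - b log r) = P(Z ≤ a - b log r) = P(r ≤ e^{(a - Z)/b})`, so the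
layer-cake formula turns `∫₀^∞ r^{p-1} G(a - b log r) dr` into the lognormal moment
`E[e^{p(a - Z)/b}] / p = e^{pa/b + p²/(2b²)} / p`, read off the Gaussian moment generating function.
Polar coordinates in the plane give `p = 2`, and for `a = (s - β log K - n/β)/√n`, `b = β/√n`
the two occurrences of `n` in the exponent cancel.
-/

open MeasureTheory Real

/-- The standard normal cumulative distribution function
`G(t) = ∫_{-∞}^t e^{-u²/2} du / √(2π)`. -/
noncomputable def stdNormalCDF (t : ℝ) : ℝ :=
  ∫ u in Set.Iic t, Real.exp (-u ^ 2 / 2) / Real.sqrt (2 * Real.pi)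

open ProbabilityTheory Set

theorem stdNormalCDF_eq_cdf_gaussianReal : stdNormalCDF = cdf (gaussianReal 0 1) := by
  ext t
  rw [cdf_eq_real, measureReal_def, gaussianReal_apply_eq_integral _ one_ne_zero,
    ENNReal.toReal_ofReal
      (setIntegral_nonneg measurableSet_Iic fun _ _ => gaussianPDFReal_nonneg _ _ _)]
  simp [stdNormalCDF, gaussianPDFReal, div_eq_inv_mul]

theorem lintegral_ofReal_exp_mul_gaussianReal (μ : ℝ) (v : NNReal) (t : ℝ) :
    ∫⁻ x, ENNReal.ofReal (exp (t * x)) ∂gaussianReal μ v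
      = ENNReal.ofReal (exp (μ * t + v * t ^ 2 / 2)) := by
  rw [← ofReal_integral_eq_lintegral_ofReal (integrable_exp_mul_gaussianReal t)
    (Filter.Eventually.of_forall fun x => (exp_pos _).le), ← congrFun mgf_id_gaussianReal t]
  rfl

theorem integral_fun_norm_euclideanSpace_fin_two {E : Type*} [NormedAddCommGroup E]
    [NormedSpace ℝ E] (f : ℝ → E) :
    ∫ x : EuclideanSpace ℝ (Fin 2), f ‖x‖
      = (2 * π) • ∫ r in Ioi (0 : ℝ), r • f r := by
  have hball : volume.real (Metric.ball (0 : EuclideanSpace ℝ (Fin 2)) 1) = π := by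
    rw [measureReal_def, EuclideanSpace.volume_ball]
    norm_num [Real.Gamma_two, Real.sq_sqrt Real.pi_pos.le, Real.pi_pos.le]
  rw [integral_fun_norm_addHaar, finrank_euclideanSpace_fin, hball]
  simp only [Nat.add_one_sub_one, pow_one, mul_smul, ← Nat.cast_smul_eq_nsmul ℝ, Nat.cast_ofNat]

theorem integral_rpow_mul_stdNormalCDF_sub_mul_log {p b : ℝ} (hp : 0 < p) (hb : 0 < b) (a : ℝ) :
    ∫ r in Ioi (0 : ℝ), r ^ (p - 1) * stdNormalCDF (a - b * log r)
      = exp (p * a / b + p ^ 2 / (2 * b ^ 2)) / p := by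
  set γ := gaussianReal 0 1
  set R : ℝ → ℝ := fun u => exp ((a - u) / b)
  have hlevel : ∀ r : ℝ, 0 < r → {u | r ≤ R u} = Iic (a - b * log r) := by
    intro r hr
    ext u
    simp only [R, mem_ofPred_eq, mem_Iic, ← log_le_iff_le_exp hr, le_div_iff₀ hb]
    constructor <;> intro h <;> linarith
  have hmoment : ∫⁻ u, ENNReal.ofReal (R u ^ p) ∂γ
      = ENNReal.ofReal (exp (p * a / b + p ^ 2 / (2 * b ^ 2))) := by
    have hRp : ∀ u, ENNReal.ofReal (R u ^ p)
        = ENNReal.ofReal (exp (p * a / b)) * ENNReal.ofReal (exp (-p / b * u)) := by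
      intro u
      rw [← ENNReal.ofReal_mul (exp_pos _).le, ← exp_mul, ← exp_add]
      ring_nf
    simp_rw [hRp]
    rw [lintegral_const_mul _ (by fun_prop), lintegral_ofReal_exp_mul_gaussianReal,
      ← ENNReal.ofReal_mul (exp_pos _).le, ← exp_add]
    congr 2
    push_cast
    ring
  have hcake := lintegral_rpow_eq_lintegral_meas_le_mul γ (f := R)
    (Filter.Eventually.of_forall fun u => (exp_pos _).le) (by fun_prop) hp
  have hcdf : ∀ r ∈ Ioi (0 : ℝ), ENNReal.ofReal (r ^ (p - 1) * stdNormalCDF (a - b * log r))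
      = γ {u | r ≤ R u} * ENNReal.ofReal (r ^ (p - 1)) := by
    intro r hr
    rw [hlevel r hr, stdNormalCDF_eq_cdf_gaussianReal,
      ENNReal.ofReal_mul (rpow_nonneg (le_of_lt hr) _), ofReal_cdf, mul_comm]
  rw [integral_eq_lintegral_of_nonneg_ae, setLIntegral_congr_fun measurableSet_Ioi hcdf]
  · rw [hmoment] at hcake
    have hcake_real := congrArg ENNReal.toReal hcake
    rw [ENNReal.toReal_mul, ENNReal.toReal_ofReal hp.le,
      ENNReal.toReal_ofReal (exp_pos _).le] at hcake_real
    rw [hcake_real]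
    field_simp
  · filter_upwards [ae_restrict_mem measurableSet_Ioi] with r hr
    rw [stdNormalCDF_eq_cdf_gaussianReal]
    exact mul_nonneg (rpow_nonneg (le_of_lt hr) _) (cdf_nonneg _ _)
  · rw [stdNormalCDF_eq_cdf_gaussianReal]
    exact (by fun_prop : Measurable fun r : ℝ => r ^ (p - 1)).aestronglyMeasurable.mul
      ((cdf γ).mono.measurable.comp (by fun_prop)).aestronglyMeasurable

theorem stmt_2 (β K n s : ℝ) (hβ : 0 < β) (hK : 0 < K) (hn : 0 < n) :
    (∫ x : EuclideanSpace ℝ (Fin 2),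
        stdNormalCDF ((s - β * Real.log (K * ‖x‖) - n / β) / Real.sqrt n))
      = 2 * π * ∫ r in Set.Ioi (0:ℝ),
          r * stdNormalCDF ((s - β * Real.log (K * r) - n / β) / Real.sqrt n)
    ∧ (∫ x : EuclideanSpace ℝ (Fin 2),
        stdNormalCDF ((s - β * Real.log (K * ‖x‖) - n / β) / Real.sqrt n))
      = (π / K ^ 2) * Real.exp (2 * s / β) := by
  have hpolar := integral_fun_norm_euclideanSpace_fin_two
    fun r => stdNormalCDF ((s - β * log (K * r) - n / β) / √n)
  simp only [smul_eq_mul] at hpolar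
  refine ⟨hpolar, ?_⟩
  have hsqrt : 0 < √n := sqrt_pos.mpr hn
  have hlinear : ∀ r ∈ Ioi (0 : ℝ), r * stdNormalCDF ((s - β * log (K * r) - n / β) / √n)
      = r ^ ((2 : ℝ) - 1)
        * stdNormalCDF ((s - β * log K - n / β) / √n - β / √n * log r) := by
    intro r hr
    rw [log_mul hK.ne' (ne_of_gt hr), show (2 : ℝ) - 1 = 1 by norm_num, rpow_one]
    congr 2
    ring
  have hexponent :
      2 * ((s - β * log K - n / β) / √n) / (β / √n) + 2 ^ 2 / (2 * (β / √n) ^ 2)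
        = 2 * s / β - 2 * log K := by
    field_simp
    rw [sq_sqrt hn.le]
    ring
  rw [hpolar, setIntegral_congr_fun measurableSet_Ioi hlinear,
    integral_rpow_mul_stdNormalCDF_sub_mul_log two_pos (div_pos hβ hsqrt), hexponent,
    exp_sub, two_mul (log K), exp_add, exp_log hK]
  field_simp
end

section
/- Let β > 2, K > 0, 0 < λ < ∞, and let φ = {X_i} be a locally finite set of points in ℝ² \ {0} (every bounded subset of ℝ² contains finitely many points of φ) satisfying the empirical homogeneity condition #(φ ∩ B_0(r))/(πr²) → λ as r → ∞, where B_0(r) is the open ball of radius r centered at the origin. Then for every s ∈ ℝ, the sum Σ_{X_i ∈ φ} G( (s − β·log(K|X_i|) − n/β)/√n ) converges, as n → ∞, to (λπ/K²) · e^{2s/β}. -/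
open MeasureTheory Real Filter

/-!
Write `G(t) = P(U < t)` for a standard normal `U`. For `n ≥ 1` the event
`U < (s - β log (K |x|) - n / β) / √n` is `|x| < Rₙ(U)`, where
`Rₙ(u) = exp ((s - n/β - √n u) / β) / K`, so by Tonelli the sum equals `E[N(Rₙ(U))]` with
`N(r) = #(φ ∩ B₀(r))`. Homogeneity together with the absence of points near the origin gives
`|N(r) - λπr²| ≤ ε r² + C_ε r` for all `r > 0`, and the Gaussian moment generating function
gives `E[Rₙ(U)²] = e^{2s/β} / K²` for every `n`, while `E[Rₙ(U)] = e^{s/β - n/(2β²)} / K → 0`.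
-/

open ProbabilityTheory Topology Metric

lemma tendsto_of_forall_abs_sub_le {ι : Type*} {l : Filter ι} {x y : ι → ℝ} {L : ℝ}
    (hy : Tendsto y l (𝓝 0)) (h : ∀ ε > 0, ∃ C, ∀ i, |x i - L| ≤ ε + C * y i) :
    Tendsto x l (𝓝 L) := by
  refine Metric.tendsto_nhds.mpr fun η hη => ?_
  obtain ⟨C, hC⟩ := h (η / 2) (half_pos hη)
  have hCy : Tendsto (fun i => C * y i) l (𝓝 0) := by simpa using hy.const_mul C
  filter_upwards [hCy.eventually (gt_mem_nhds (half_pos hη))] with i hi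
  rw [Real.dist_eq]
  linarith [hC i]

lemma exists_abs_sub_mul_sq_le {N : ℝ → ℝ} {ℓ δ : ℝ} (hmono : Monotone N) (hδ : 0 < δ)
    (hzero : ∀ r ≤ δ, N r = 0) (hlim : Tendsto (fun r => N r / r ^ 2) atTop (𝓝 ℓ)) :
    ∀ ε > 0, ∃ C, ∀ r > 0, |N r - ℓ * r ^ 2| ≤ ε * r ^ 2 + C * r := by
  intro ε hε
  obtain ⟨M₀, hM₀⟩ := Metric.tendsto_atTop.mp hlim ε hε
  set M := max M₀ δ
  have hδM : δ ≤ M := le_max_right _ _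
  have hNM : 0 ≤ N M := hzero δ le_rfl ▸ hmono hδM
  -- below `δ` only `ℓ r²` survives, and between `δ` and `M` everything is bounded by a constant
  refine ⟨|ℓ| * M + (N M + |ℓ| * M ^ 2) / δ, fun r hr => ?_⟩
  have hC₁ : 0 ≤ |ℓ| * M * r := by positivity
  have hC₂ : 0 ≤ (N M + |ℓ| * M ^ 2) / δ * r := by positivity
  rcases le_or_gt M r with hMr | hrM
  · have hdist := hM₀ r (le_trans (le_max_left _ _) hMr)
    rw [Real.dist_eq] at hdist
    have hsplit : N r - ℓ * r ^ 2 = (N r / r ^ 2 - ℓ) * r ^ 2 := by field_simp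
    rw [hsplit, abs_mul, abs_of_nonneg (sq_nonneg r)]
    nlinarith [sq_nonneg r]
  rcases le_or_gt r δ with hrδ | hδr
  · rw [hzero r hrδ, zero_sub, abs_neg, abs_mul, abs_of_nonneg (sq_nonneg r), sq]
    have := mul_le_mul_of_nonneg_left hrM.le (mul_nonneg (abs_nonneg ℓ) hr.le)
    nlinarith [mul_nonneg hε.le (sq_nonneg r)]
  · have hNr : 0 ≤ N r := hzero δ le_rfl ▸ hmono hδr.le
    have hr2 : r ^ 2 ≤ M ^ 2 := by nlinarith
    have hbound : |N r - ℓ * r ^ 2| ≤ N M + |ℓ| * M ^ 2 := by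
      rw [abs_le]
      constructor <;> nlinarith [hmono hrM.le, neg_abs_le ℓ, le_abs_self ℓ]
    have hlin : N M + |ℓ| * M ^ 2 ≤ (N M + |ℓ| * M ^ 2) / δ * r := by
      rw [div_mul_eq_mul_div, le_div_iff₀ hδ]
      exact mul_le_mul_of_nonneg_left hδr.le (by positivity)
    linarith [mul_nonneg hε.le (sq_nonneg r)]

lemma tendsto_integral_comp_of_abs_sub_le {α : Type*} [MeasurableSpace α] {μ : Measure α}
    {N : ℝ → ℝ} {ℓ A : ℝ} {R : ℕ → α → ℝ}
    (hN : ∀ ε > 0, ∃ C, ∀ r > 0, |N r - ℓ * r ^ 2| ≤ ε * r ^ 2 + C * r)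
    (hNm : Measurable N) (hRpos : ∀ n u, 0 < R n u) (hRm : ∀ n, Measurable (R n))
    (hR : ∀ n, Integrable (R n) μ) (hR2 : ∀ n, Integrable (fun u => R n u ^ 2) μ)
    (hR2A : ∀ n, ∫ u, R n u ^ 2 ∂μ = A)
    (hR0 : Tendsto (fun n => ∫ u, R n u ∂μ) atTop (𝓝 0)) :
    Tendsto (fun n => ∫ u, N (R n u) ∂μ) atTop (𝓝 (ℓ * A)) := by
  refine tendsto_of_forall_abs_sub_le hR0 fun ε hε => ?_
  have hA : 0 ≤ A := hR2A 0 ▸ integral_nonneg fun u => sq_nonneg _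
  obtain ⟨C, hC⟩ := hN (ε / (A + 1)) (by positivity)
  refine ⟨C, fun n => ?_⟩
  have hmajor : Integrable (fun u => ε / (A + 1) * R n u ^ 2 + C * R n u) μ :=
    ((hR2 n).const_mul _).add ((hR n).const_mul _)
  have hdev : ∀ u, ‖N (R n u) - ℓ * R n u ^ 2‖ ≤ ε / (A + 1) * R n u ^ 2 + C * R n u :=
    fun u => hC _ (hRpos n u)
  have hdev_int : Integrable (fun u => N (R n u) - ℓ * R n u ^ 2) μ :=
    hmajor.mono' (by fun_prop) (ae_of_all _ hdev)
  have hsplit : ∫ u, N (R n u) ∂μ - ℓ * A = ∫ u, (N (R n u) - ℓ * R n u ^ 2) ∂μ := by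
    have hNR : Integrable (fun u => N (R n u)) μ := by
      simpa only [sub_add_cancel] using hdev_int.fun_add ((hR2 n).const_mul ℓ)
    rw [integral_sub hNR ((hR2 n).const_mul ℓ), integral_const_mul, hR2A]
  have hεA : ε / (A + 1) * A ≤ ε := by
    rw [div_mul_eq_mul_div, div_le_iff₀ (by positivity)]
    nlinarith
  calc |∫ u, N (R n u) ∂μ - ℓ * A|
      ≤ ∫ u, (ε / (A + 1) * R n u ^ 2 + C * R n u) ∂μ := by
        rw [hsplit]; exact norm_integral_le_of_norm_le hmajor (ae_of_all _ hdev)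
    _ = ε / (A + 1) * A + C * ∫ u, R n u ∂μ := by
        rw [integral_add ((hR2 n).const_mul _) ((hR n).const_mul _), integral_const_mul,
          integral_const_mul, hR2A]
    _ ≤ ε + C * ∫ u, R n u ∂μ := by linarith

section ballCount

variable {E : Type*} [NormedAddCommGroup E] {φ : Set E}

noncomputable def ballCount (φ : Set E) (r : ℝ) : ℝ := Nat.card ↥(φ ∩ ball 0 r)

lemma ballCount_mono (hloc : ∀ r, (φ ∩ ball 0 r).Finite) : Monotone (ballCount φ) :=
  fun _ b hab => Nat.cast_le.mpr <|
    Nat.card_mono (hloc b) (Set.inter_subset_inter_right φ (ball_subset_ball hab))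

lemma exists_ballCount_eq_zero (hloc : ∀ r, (φ ∩ ball 0 r).Finite) (h0 : (0 : E) ∉ φ) :
    ∃ δ > 0, ∀ r ≤ δ, ballCount φ r = 0 := by
  obtain ⟨ε, hε, hball⟩ :=
    Metric.isOpen_iff.mp (hloc 1).isClosed.isOpen_compl 0 (fun h => h0 h.1)
  refine ⟨min ε 1, by positivity, fun r hr => ?_⟩
  suffices φ ∩ ball 0 r = ∅ by simp [ballCount, this]
  refine Set.eq_empty_of_forall_notMem fun x ⟨hxφ, hxr⟩ => ?_
  have hx : ‖x‖ < min ε 1 := lt_of_lt_of_le (mem_ball_zero_iff.mp hxr) hr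
  exact hball (mem_ball_zero_iff.mpr (hx.trans_le (min_le_left _ _)))
    ⟨hxφ, mem_ball_zero_iff.mpr (hx.trans_le (min_le_right _ _))⟩

lemma tsum_indicator_ball_eq_ballCount {r : ℝ} (hfin : (φ ∩ ball 0 r).Finite) :
    ∑' x : φ, (ball (0 : E) r).indicator (1 : E → ENNReal) x =
      ENNReal.ofReal (ballCount φ r) := by
  rw [tsum_subtype φ ((ball (0 : E) r).indicator 1), Set.indicator_indicator, ← tsum_subtype]
  change ∑' _ : ↥(φ ∩ ball 0 r), (1 : ENNReal) = _
  rw [ENNReal.tsum_set_one, ← hfin.cast_ncard_eq, ballCount,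
    Nat.card_coe_set_eq, ENNReal.ofReal_natCast]
  rfl

lemma tsum_measureReal_norm_lt_eq_integral_ballCount (hloc : ∀ r, (φ ∩ ball 0 r).Finite)
    {α : Type*} [MeasurableSpace α] (μ : Measure α) [IsFiniteMeasure μ] {R : α → ℝ}
    (hR : Measurable R) :
    ∑' x : φ, μ.real {u | ‖(x : E)‖ < R u} = ∫ u, ballCount φ (R u) ∂μ := by
  have : Countable φ := by
    refine (Set.Countable.mono (fun x hx => ?_) (Set.countable_iUnion fun n : ℕ =>
      (hloc n).countable)).to_subtype
    obtain ⟨n, hn⟩ := exists_nat_gt ‖x‖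
    exact Set.mem_iUnion.mpr ⟨n, hx, mem_ball_zero_iff.mpr hn⟩
  have hmeas (x : E) : MeasurableSet {u | ‖x‖ < R u} := measurableSet_lt measurable_const hR
  rw [integral_eq_lintegral_of_nonneg_ae (f := fun u => ballCount φ (R u))
      (ae_of_all _ fun u => Nat.cast_nonneg _)
      ((ballCount_mono hloc).measurable.comp hR).aestronglyMeasurable]
  simp_rw [measureReal_def]
  rw [← ENNReal.tsum_toReal_eq fun x => measure_ne_top μ _]
  congr 1
  simp_rw [← lintegral_indicator_one (hmeas _)]
  rw [← lintegral_tsum (f := fun x : φ => {u | ‖(x : E)‖ < R u}.indicator 1)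
    fun x => (measurable_const.indicator (hmeas _)).aemeasurable]
  congr 1 with u
  rw [← tsum_indicator_ball_eq_ballCount (hloc (R u))]
  congr with x
  classical
  simp [Set.indicator_apply]

end ballCount

lemma stdNormalCDF_eq_measureReal_Iio (t : ℝ) :
    stdNormalCDF t = (gaussianReal 0 1).real (Set.Iio t) := by
  have : NullSingletonClass (gaussianReal 0 1) := nullSingletonClass_gaussianReal one_ne_zero
  rw [measureReal_congr Iio_ae_eq_Iic, measureReal_def,
    gaussianReal_apply_eq_integral _ one_ne_zero, ENNReal.toReal_ofReal
      (setIntegral_nonneg measurableSet_Iic fun u _ => gaussianPDFReal_nonneg _ _ _)]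
  refine setIntegral_congr_fun measurableSet_Iic fun u _ => ?_
  simp [gaussianPDFReal, div_eq_inv_mul]

lemma integrable_exp_add_mul_gaussianReal (m : ℝ) (v : NNReal) (a b : ℝ) :
    Integrable (fun u => exp (a + b * u)) (gaussianReal m v) := by
  simp_rw [exp_add]
  exact (integrable_exp_mul_gaussianReal b).const_mul _

lemma integral_exp_add_mul_gaussianReal (m : ℝ) (v : NNReal) (a b : ℝ) :
    ∫ u, exp (a + b * u) ∂gaussianReal m v = exp (a + m * b + v * b ^ 2 / 2) := by
  simp_rw [exp_add a, integral_const_mul]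
  rw [← mgf, mgf_fun_id_gaussianReal, add_assoc, exp_add]

section lossRadius

variable {β K : ℝ} (s : ℝ) (n : ℕ)

-- With the shadowing written as `√n * u`, `u` standard normal, the station at `x` has loss at
-- most `s` exactly when `‖x‖ < lossRadius β K s n u`.
noncomputable def lossRadius (β K s : ℝ) (n : ℕ) (u : ℝ) : ℝ :=
  exp ((s - n / β) / β + -(√n / β) * u) / K

lemma lossRadius_pos (hK : 0 < K) (u : ℝ) : 0 < lossRadius β K s n u := by
  unfold lossRadius; positivity

lemma continuous_lossRadius : Continuous (lossRadius β K s n) := by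
  unfold lossRadius; fun_prop

lemma lt_lossRadius_iff (hβ : 0 < β) (hK : 0 < K) (hn : 0 < n) {r : ℝ} (hr : 0 < r)
    (u : ℝ) : r < lossRadius β K s n u ↔ u < (s - β * log (K * r) - n / β) / √n := by
  have hsqrt : 0 < √(n : ℝ) := sqrt_pos.mpr (Nat.cast_pos.mpr hn)
  have hexp : (s - n / β) / β + -(√n / β) * u = (s - n / β - √n * u) / β := by ring
  rw [lossRadius, hexp, lt_div_iff₀ hK, mul_comm, ← log_lt_iff_lt_exp (by positivity),
    lt_div_iff₀ hβ, lt_div_iff₀ hsqrt]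
  constructor <;> intro h <;> linarith

lemma lossRadius_sq (u : ℝ) :
    lossRadius β K s n u ^ 2 = exp (2 * ((s - n / β) / β) + -(2 * √n / β) * u) / K ^ 2 := by
  rw [lossRadius, div_pow, ← exp_nat_mul]
  congr 2
  ring

lemma integrable_lossRadius : Integrable (lossRadius β K s n) (gaussianReal 0 1) :=
  (integrable_exp_add_mul_gaussianReal 0 1 _ _).div_const K

lemma integrable_lossRadius_sq :
    Integrable (fun u => lossRadius β K s n u ^ 2) (gaussianReal 0 1) := by
  simp_rw [lossRadius_sq]
  exact (integrable_exp_add_mul_gaussianReal 0 1 _ _).div_const _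

lemma integral_lossRadius_sq (hβ : β ≠ 0) :
    ∫ u, lossRadius β K s n u ^ 2 ∂gaussianReal 0 1 = exp (2 * s / β) / K ^ 2 := by
  simp_rw [lossRadius_sq, integral_div, integral_exp_add_mul_gaussianReal]
  congr 2
  push_cast
  rw [neg_sq, div_pow, mul_pow, sq_sqrt n.cast_nonneg]
  field_simp
  ring

lemma integral_lossRadius (hβ : β ≠ 0) :
    ∫ u, lossRadius β K s n u ∂gaussianReal 0 1 = exp (s / β - n / (2 * β ^ 2)) / K := by
  simp_rw [lossRadius, integral_div, integral_exp_add_mul_gaussianReal]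
  congr 2
  push_cast
  rw [neg_sq, div_pow, sq_sqrt n.cast_nonneg]
  field_simp
  ring

lemma tendsto_integral_lossRadius (hβ : β ≠ 0) :
    Tendsto (fun n : ℕ => ∫ u, lossRadius β K s n u ∂gaussianReal 0 1) atTop (𝓝 0) := by
  simp_rw [integral_lossRadius s _ hβ]
  have : Tendsto (fun n : ℕ => s / β - n / (2 * β ^ 2)) atTop atBot :=
    tendsto_atBot_add_const_left _ _ <| tendsto_neg_atTop_atBot.comp <|
      tendsto_natCast_atTop_atTop.atTop_div_const (by positivity)
  simpa using (tendsto_exp_atBot.comp this).div_const K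

end lossRadius

theorem stmt_5_general (β K lam s : ℝ) (hβ : 2 < β) (hK : 0 < K)
    (φ : Set (EuclideanSpace ℝ (Fin 2))) (h0 : (0 : EuclideanSpace ℝ (Fin 2)) ∉ φ)
    (hloc : ∀ B : Set (EuclideanSpace ℝ (Fin 2)), Bornology.IsBounded B → (φ ∩ B).Finite)
    (hhom : Tendsto (fun r : ℝ => (Nat.card ↥(φ ∩ Metric.ball 0 r) : ℝ) / (π * r ^ 2))
      atTop (nhds lam)) :
    Tendsto (fun n : ℕ =>
        ∑' X : φ, stdNormalCDF ((s - β * Real.log (K * ‖(X : EuclideanSpace ℝ (Fin 2))‖)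
          - (n : ℝ) / β) / Real.sqrt (n : ℝ)))
      atTop (nhds (lam * π / K ^ 2 * Real.exp (2 * s / β))) := by
  have hβ0 : 0 < β := by linarith
  have hfin (r : ℝ) : (φ ∩ ball 0 r).Finite := hloc _ isBounded_ball
  obtain ⟨δ, hδ, hzero⟩ := exists_ballCount_eq_zero hfin h0
  have hgrowth : Tendsto (fun r => ballCount φ r / r ^ 2) atTop (𝓝 (lam * π)) := by
    refine (hhom.mul_const π).congr fun r => ?_
    rw [ballCount, div_mul_eq_mul_div, mul_comm π, mul_div_mul_right _ _ pi_ne_zero]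
  have hlim := tendsto_integral_comp_of_abs_sub_le
    (exists_abs_sub_mul_sq_le (ballCount_mono hfin) hδ hzero hgrowth)
    (ballCount_mono hfin).measurable (fun n => lossRadius_pos s n hK)
    (fun n => (continuous_lossRadius s n).measurable) (integrable_lossRadius s)
    (integrable_lossRadius_sq s) (fun n => integral_lossRadius_sq s n hβ0.ne')
    (tendsto_integral_lossRadius s hβ0.ne')
  rw [show lam * π / K ^ 2 * exp (2 * s / β) = lam * π * (exp (2 * s / β) / K ^ 2) by ring]
  refine hlim.congr' (eventually_atTop.mpr ⟨1, fun n hn => ?_⟩)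
  rw [← tsum_measureReal_norm_lt_eq_integral_ballCount hfin _
    (continuous_lossRadius s n).measurable]
  refine tsum_congr fun X => ?_
  have hX : 0 < ‖(X : EuclideanSpace ℝ (Fin 2))‖ := norm_pos_iff.mpr fun h => h0 (h ▸ X.2)
  rw [stdNormalCDF_eq_measureReal_Iio]
  congr 1 with u
  exact lt_lossRadius_iff s n hβ0 hK hn hX u

theorem stmt_5 (β K lam s : ℝ) (hβ : 2 < β) (hK : 0 < K) (hlam : 0 < lam)
    (φ : Set (EuclideanSpace ℝ (Fin 2))) (h0 : (0 : EuclideanSpace ℝ (Fin 2)) ∉ φ)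
    (hloc : ∀ B : Set (EuclideanSpace ℝ (Fin 2)), Bornology.IsBounded B → (φ ∩ B).Finite)
    (hhom : Tendsto (fun r : ℝ => (Nat.card ↥(φ ∩ Metric.ball 0 r) : ℝ) / (π * r ^ 2))
      atTop (nhds lam)) :
    Tendsto (fun n : ℕ =>
        ∑' X : φ, stdNormalCDF ((s - β * Real.log (K * ‖(X : EuclideanSpace ℝ (Fin 2))‖)
          - (n : ℝ) / β) / Real.sqrt (n : ℝ)))
      atTop (nhds (lam * π / K ^ 2 * Real.exp (2 * s / β))) :=
  stmt_5_general β K lam s hβ hK φ h0 hloc hhom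
end
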